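/- arXiv:2406.07926 — 2 statements merged into one kernel-verified Lean document; each statement's English description precedes it below -/
import Mathlib

section
/- For any finite simple graph G with n vertices and m edges, the sum over all vertices of the square of their degrees is at most m(2m/(n-1) + n - 2), assuming n ≥ 2. -/
/-!
Write `A` for the adjacency matrix and `d` for the degree vector. For distinct vertices `i, j`
the entries `A i i - A j i` and `A i j - A j j` cancel, so `d i - d j` is a sum of the `n - 2`
remaining differences `A i k - A j k`, and Cauchy–Schwarz gives
`(d i - d j)² ≤ (n - 2) (|N(i) Δ N(j)| - 2 A i j)`. Summing over all ordered pairs, the left side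
is `2 (n ∑ d² - (2m)²)` and the right side is `(n - 2) · 2 (2nm - ∑ d² - 2m)`, because
`∑_{i,j} |N(i) ∩ N(j)| = ∑ d²`. Solving for `∑ d²` gives the bound.
-/

open Finset

theorem Finset.sum_sum_sub_sq {ι R : Type*} [CommRing R] (s : Finset ι) (f : ι → R) :
    ∑ i ∈ s, ∑ j ∈ s, (f i - f j) ^ 2 = 2 * (#s * ∑ i ∈ s, f i ^ 2 - (∑ i ∈ s, f i) ^ 2) := by
  simp only [sub_sq, sum_add_distrib, sum_sub_distrib, sum_const, nsmul_eq_mul, ← mul_sum,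
    ← sum_mul, mul_assoc]
  ring

namespace SimpleGraph

variable {V : Type*} [Fintype V] (G : SimpleGraph V) [DecidableRel G.Adj]

theorem sum_adjMatrix_apply {R : Type*} [NonAssocSemiring R] (i : V) :
    ∑ k, G.adjMatrix R i k = G.degree i := by
  simpa [Matrix.mulVec, dotProduct] using G.adjMatrix_mulVec_const_apply (a := (1 : R)) (v := i)

theorem sum_adjMatrix_apply_left {R : Type*} [NonAssocSemiring R] (k : V) :
    ∑ i, G.adjMatrix R i k = G.degree k := by
  simpa only [(G.isSymm_adjMatrix (α := R)).apply k] using G.sum_adjMatrix_apply k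

theorem sum_sum_adjMatrix {R : Type*} [NonAssocSemiring R] :
    ∑ i, ∑ j, G.adjMatrix R i j = 2 * #G.edgeFinset := by
  simp_rw [sum_adjMatrix_apply, ← Nat.cast_sum, G.sum_degrees_eq_twice_card_edges]
  push_cast
  rfl

theorem sum_sq_adjMatrix_sub_adjMatrix {R : Type*} [CommRing R] (i j : V) :
    ∑ k, (G.adjMatrix R i k - G.adjMatrix R j k) ^ 2 =
      G.degree i + G.degree j - 2 * ∑ k, G.adjMatrix R i k * G.adjMatrix R j k := by
  have h01 (k : V) : (G.adjMatrix R i k - G.adjMatrix R j k) ^ 2 =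
      G.adjMatrix R i k + G.adjMatrix R j k - 2 * (G.adjMatrix R i k * G.adjMatrix R j k) := by
    simp only [adjMatrix_apply]
    split_ifs <;> ring
  simp_rw [h01, sum_sub_distrib, sum_add_distrib, ← mul_sum, sum_adjMatrix_apply]

theorem sum_sum_sum_adjMatrix_mul_adjMatrix {R : Type*} [CommRing R] :
    ∑ i, ∑ j, ∑ k, G.adjMatrix R i k * G.adjMatrix R j k = ∑ k, (G.degree k : R) ^ 2 := by
  simp_rw [sq, ← G.sum_adjMatrix_apply_left (R := R), sum_mul_sum]
  exact (sum_congr rfl fun i _ => sum_comm).trans sum_comm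

theorem sum_sum_sum_sq_adjMatrix_sub_adjMatrix {R : Type*} [CommRing R] :
    ∑ i, ∑ j, ∑ k, (G.adjMatrix R i k - G.adjMatrix R j k) ^ 2 =
      2 * (Fintype.card V * (2 * #G.edgeFinset) - ∑ k, (G.degree k : R) ^ 2) := by
  simp_rw [sum_sq_adjMatrix_sub_adjMatrix, sum_sub_distrib, sum_add_distrib, ← mul_sum,
    sum_sum_sum_adjMatrix_mul_adjMatrix, sum_const, card_univ, nsmul_eq_mul, ← mul_sum,
    ← Nat.cast_sum, G.sum_degrees_eq_twice_card_edges]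
  push_cast
  ring

theorem sq_degree_sub_degree_le {R : Type*} [CommRing R] [LinearOrder R] [IsStrictOrderedRing R]
    [DecidableEq V] (i j : V) :
    ((G.degree i : R) - G.degree j) ^ 2 ≤ (Fintype.card V - 2) *
      (∑ k, (G.adjMatrix R i k - G.adjMatrix R j k) ^ 2 - 2 * G.adjMatrix R i j) := by
  rcases eq_or_ne i j with rfl | hij
  · simp
  have hcard : (#({i, j}ᶜ : Finset V) : R) = Fintype.card V - 2 := by
    have h2 : 2 ≤ Fintype.card V := card_pair hij ▸ card_le_univ {i, j}
    rw [card_compl, card_pair hij, Nat.cast_sub h2, Nat.cast_two]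
  have hdiff : (G.degree i : R) - G.degree j =
      ∑ k ∈ {i, j}ᶜ, (G.adjMatrix R i k - G.adjMatrix R j k) := by
    rw [← G.sum_adjMatrix_apply, ← G.sum_adjMatrix_apply, ← sum_sub_distrib,
      ← sum_compl_add_sum {i, j}, sum_pair hij]
    simp [adjMatrix_apply, G.adj_comm]
  have hsq : ∑ k ∈ {i, j}ᶜ, (G.adjMatrix R i k - G.adjMatrix R j k) ^ 2 =
      ∑ k, (G.adjMatrix R i k - G.adjMatrix R j k) ^ 2 - 2 * G.adjMatrix R i j := by
    rw [← sum_compl_add_sum {i, j}, sum_pair hij]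
    by_cases h : G.Adj i j <;> simp [adjMatrix_apply, G.adj_comm, h]
    ring
  rw [hdiff, ← hcard, ← hsq]
  exact sq_sum_le_card_mul_sum_sq

theorem card_sub_one_mul_sum_sq_degree_le {R : Type*} [Field R] [LinearOrder R]
    [IsStrictOrderedRing R] [DecidableEq V] :
    (Fintype.card V - 1 : R) * ∑ v, (G.degree v : R) ^ 2 ≤
      2 * #G.edgeFinset ^ 2 + #G.edgeFinset * (Fintype.card V - 1) * (Fintype.card V - 2) := by
  have hpairs := sum_le_sum fun i (_ : i ∈ univ) =>
    sum_le_sum fun j (_ : j ∈ univ) => G.sq_degree_sub_degree_le (R := R) i j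
  simp_rw [← mul_sum, sum_sub_distrib, ← mul_sum] at hpairs
  rw [G.sum_sum_sum_sq_adjMatrix_sub_adjMatrix, G.sum_sum_adjMatrix, sum_sum_sub_sq,
    card_univ, ← Nat.cast_sum, G.sum_degrees_eq_twice_card_edges] at hpairs
  push_cast at hpairs
  linear_combination hpairs / 4

end SimpleGraph

/-- de Caen's bound: for a finite simple graph with `n ≥ 2` vertices and `m` edges,
`∑ d(v)^2 ≤ m (2m/(n-1) + n - 2)`. -/
theorem deCaen_bound {V : Type*} [Fintype V] [DecidableEq V]
    (G : SimpleGraph V) [DecidableRel G.Adj]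
    (n m : ℕ) (hn : n = Fintype.card V) (hm : m = G.edgeFinset.card) (hn2 : 2 ≤ n) :
    ∑ v : V, (G.degree v : ℝ) ^ 2 ≤ (m : ℝ) * (2 * m / ((n : ℝ) - 1) + (n : ℝ) - 2) := by
  subst hn hm
  have hpos : (0 : ℝ) < Fintype.card V - 1 := by
    rw [sub_pos, Nat.one_lt_cast]
    omega
  calc _ ≤ (2 * #G.edgeFinset ^ 2 + #G.edgeFinset * (Fintype.card V - 1) * (Fintype.card V - 2) :
        ℝ) / (Fintype.card V - 1) := (le_div_iff₀' hpos).mpr G.card_sub_one_mul_sum_sq_degree_le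
    _ = _ := by
      field_simp
      ring
end

section
/- For any finite simple graph G with n vertices and m edges, the sum over all vertices of the square of their degrees is at most 2m^2/n + mn (a weakened form of de Caen's bound sufficient for O(m^2/n + mn) complexity estimates). -/
open Finset

/-!
Write `s u` for the sum of the degrees of the neighbours of `u`, so that `∑ u, s u = ∑ v, d(v)²`.
Each `s u` obeys two bounds: `s u ≤ (n - 1) d(u)`, since every degree is at most `n - 1`, and
`d(u) + s u ≤ 2m`, since `u` and its neighbours contribute only part of the degree sum `2m`.
Weighting the first bound by `n - d(u)` and the second by `d(u)` gives
`n s u ≤ (2m + n(n - 1)) d(u) - n d(u)²`, and summing over `u` yields `n ∑ d² ≤ 2m² + mn(n - 1)`.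
-/

namespace SimpleGraph

variable {V : Type*} [Fintype V] (G : SimpleGraph V) [DecidableRel G.Adj]

theorem sum_sum_neighborFinset {M : Type*} [AddCommMonoid M] (f : V → M) :
    ∑ u, ∑ v ∈ G.neighborFinset u, f v = ∑ v, G.degree v • f v := by
  rw [sum_comm' (t' := univ) (s' := fun v => G.neighborFinset v)
    (fun u v => by simp [adj_comm])]
  simp only [sum_const, card_neighborFinset_eq_degree]

theorem sum_degree_neighborFinset_le (u : V) :
    ∑ v ∈ G.neighborFinset u, G.degree v ≤ (Fintype.card V - 1) * G.degree u := by
  calc ∑ v ∈ G.neighborFinset u, G.degree v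
      ≤ #(G.neighborFinset u) • (Fintype.card V - 1) :=
        sum_le_card_nsmul _ _ _ fun v _ => Nat.le_sub_one_of_lt (G.degree_lt_card_verts v)
    _ = (Fintype.card V - 1) * G.degree u := by
        rw [card_neighborFinset_eq_degree, smul_eq_mul, mul_comm]

theorem degree_add_sum_degree_neighborFinset_le [DecidableEq V] (u : V) :
    G.degree u + ∑ v ∈ G.neighborFinset u, G.degree v ≤ 2 * #G.edgeFinset := by
  calc G.degree u + ∑ v ∈ G.neighborFinset u, G.degree v
      = ∑ v ∈ insert u (G.neighborFinset u), G.degree v :=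
        (sum_insert (f := fun v => G.degree v) (G.notMem_neighborFinset_self u)).symm
    _ ≤ ∑ v, G.degree v := sum_le_sum_of_subset (subset_univ _)
    _ = 2 * #G.edgeFinset := G.sum_degrees_eq_twice_card_edges

theorem card_mul_sum_degree_neighborFinset_le [DecidableEq V] (u : V) :
    (Fintype.card V : ℝ) * ∑ v ∈ G.neighborFinset u, (G.degree v : ℝ) ≤
      (2 * #G.edgeFinset + Fintype.card V * (Fintype.card V - 1)) * G.degree u -
        Fintype.card V * (G.degree u : ℝ) ^ 2 := by
  have hd_le : (G.degree u : ℝ) ≤ Fintype.card V := by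
    exact_mod_cast (G.degree_lt_card_verts u).le
  have hs_cap : ∑ v ∈ G.neighborFinset u, (G.degree v : ℝ) ≤
      (Fintype.card V - 1) * G.degree u := by
    have hV : 1 ≤ Fintype.card V := Fintype.card_pos_iff.mpr ⟨u⟩
    have h := G.sum_degree_neighborFinset_le u
    rw [← Nat.cast_le (α := ℝ)] at h
    push_cast [hV] at h
    exact h
  have hs_total : G.degree u + ∑ v ∈ G.neighborFinset u, (G.degree v : ℝ) ≤
      2 * #G.edgeFinset := by
    exact_mod_cast G.degree_add_sum_degree_neighborFinset_le u
  linarith [mul_le_mul_of_nonneg_left hs_cap (sub_nonneg.mpr hd_le),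
    mul_le_mul_of_nonneg_left hs_total (Nat.cast_nonneg (G.degree u))]

theorem card_mul_sum_degree_sq_le [DecidableEq V] :
    (Fintype.card V : ℝ) * ∑ v, (G.degree v : ℝ) ^ 2 ≤
      2 * (#G.edgeFinset : ℝ) ^ 2 + #G.edgeFinset * Fintype.card V * (Fintype.card V - 1) := by
  have hsum : ∑ v, (G.degree v : ℝ) = 2 * #G.edgeFinset := by
    exact_mod_cast G.sum_degrees_eq_twice_card_edges
  set n : ℝ := (Fintype.card V : ℝ)
  set m : ℝ := (#G.edgeFinset : ℝ)
  set Q : ℝ := ∑ v, (G.degree v : ℝ) ^ 2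
  have hQ : ∑ u, ∑ v ∈ G.neighborFinset u, (G.degree v : ℝ) = Q := by
    simp only [Q, sum_sum_neighborFinset, nsmul_eq_mul, sq]
  have h : n * Q ≤ (2 * m + n * (n - 1)) * (2 * m) - n * Q :=
    calc n * Q = ∑ u, n * ∑ v ∈ G.neighborFinset u, (G.degree v : ℝ) := by rw [← mul_sum, hQ]
      _ ≤ ∑ u, ((2 * m + n * (n - 1)) * G.degree u - n * (G.degree u : ℝ) ^ 2) :=
        sum_le_sum fun u _ => G.card_mul_sum_degree_neighborFinset_le u
      _ = (2 * m + n * (n - 1)) * (2 * m) - n * Q := by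
        rw [sum_sub_distrib, ← mul_sum, ← mul_sum, hsum]
  linarith

end SimpleGraph

theorem sum_degree_sq_upper_bound_general {V : Type*} [Fintype V] [DecidableEq V]
    (G : SimpleGraph V) [DecidableRel G.Adj]
    (n m : ℕ) (hn : n = Fintype.card V) (hm : m = G.edgeFinset.card) :
    ∑ v : V, (G.degree v : ℝ) ^ 2 ≤ 2 * (m : ℝ) ^ 2 / (n : ℝ) + (m : ℝ) * (n : ℝ) := by
  subst hn hm
  rcases (Fintype.card V).eq_zero_or_pos with hV | hV
  · have : IsEmpty V := Fintype.card_eq_zero_iff.mp hV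
    simp
  · have hn : (0 : ℝ) < Fintype.card V := by exact_mod_cast hV
    rw [div_add' _ _ _ hn.ne', le_div_iff₀ hn]
    have hmn : (0 : ℝ) ≤ #G.edgeFinset * Fintype.card V := by positivity
    linarith [G.card_mul_sum_degree_sq_le]

/-- Weakened de Caen bound: `∑ d(v)^2 ≤ 2m²/n + mn`. -/
theorem sum_degree_sq_upper_bound {V : Type*} [Fintype V] [DecidableEq V]
    (G : SimpleGraph V) [DecidableRel G.Adj]
    (n m : ℕ) (hn : n = Fintype.card V) (hm : m = G.edgeFinset.card) (hn1 : 1 ≤ n) :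
    ∑ v : V, (G.degree v : ℝ) ^ 2 ≤ 2 * (m : ℝ) ^ 2 / (n : ℝ) + (m : ℝ) * (n : ℝ) :=
  sum_degree_sq_upper_bound_general G n m hn hm
end
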